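/- arXiv:2310.17579 — 7 statements merged into one kernel-verified Lean document; each statement's English description precedes it below -/
import Mathlib

section
/- Let n ≥ 1, let w ∈ ℝⁿ have strictly positive entries with W = diag(w), let V be an n×n real orthogonal matrix (VᵀV = I), and let Λ = diag(λ₁,…,λₙ) with λᵢ ∈ [0,1]. Let s₀ = 0 < s₁ = 1 < s₂ < ⋯ < s_{J+1} be natural numbers, and define the wavelet matrices Ψⱼ⁽¹⁾ = W⁻¹ V diag(√(λᵢ^{sⱼ} − λᵢ^{s_{j+1}})) Vᵀ W for 0 ≤ j ≤ J and Φ_J⁽¹⁾ = W⁻¹ V diag(√(λᵢ^{s_{J+1}})) Vᵀ W. Then for every x ∈ ℝⁿ, ‖Φ_J⁽¹⁾x‖_w² + Σ_{j=0}^{J} ‖Ψⱼ⁽¹⁾x‖_w² = ‖x‖_w², i.e., the family {Ψⱼ⁽¹⁾}_{j=0}^{J} ∪ {Φ_J⁽¹⁾} is an isometry on the weighted space. -/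
open Matrix

/-- The weighted squared norm `‖x‖_w² = Σᵢ wᵢ² xᵢ²`. -/
noncomputable def wnorm2 {n : ℕ} (w x : Fin n → ℝ) : ℝ := ∑ i, (w i) ^ 2 * (x i) ^ 2

lemma orth_sum_sq {n : ℕ} (V : Matrix (Fin n) (Fin n) ℝ) (hV : Vᵀ * V = 1) (u : Fin n → ℝ) :
    ∑ i, ((V *ᵥ u) i) ^ 2 = ∑ i, (u i) ^ 2 := by
  have h : (V *ᵥ u) ⬝ᵥ (V *ᵥ u) = u ⬝ᵥ u := by
    rw [Matrix.dotProduct_mulVec, ← Matrix.vecMul_transpose, Matrix.vecMul_vecMul, hV,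
      Matrix.vecMul_one]
  simpa [dotProduct, pow_two] using h

lemma fin_telescope : ∀ (m : ℕ) (g : Fin (m + 1) → ℝ),
    ∑ j : Fin m, (g j.castSucc - g j.succ) = g 0 - g (Fin.last m) := by
  intro m
  induction m with
  | zero => intro g; simp
  | succ m ih =>
    intro g
    rw [Fin.sum_univ_castSucc]
    have := ih (fun k => g k.castSucc)
    simp only [Fin.succ_castSucc] at this ⊢
    rw [show (∑ j : Fin m, (g j.castSucc.castSucc - g j.succ.castSucc)) = _ from this,
      Fin.castSucc_zero, show (Fin.last m).succ = Fin.last (m + 1) from rfl]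
    ring

lemma wnorm_key {n : ℕ} (w : Fin n → ℝ) (hw : ∀ i, 0 < w i)
    (V : Matrix (Fin n) (Fin n) ℝ) (hV : Vᵀ * V = 1) (d : Fin n → ℝ) (x : Fin n → ℝ) :
    wnorm2 w ((Matrix.diagonal (fun i => (w i)⁻¹) * V * Matrix.diagonal d * Vᵀ *
        Matrix.diagonal w) *ᵥ x)
      = ∑ i, (d i) ^ 2 * ((Vᵀ *ᵥ (Matrix.diagonal w *ᵥ x)) i) ^ 2 := by
  have h1 : Matrix.diagonal w * Matrix.diagonal (fun i => (w i)⁻¹) = 1 := by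
    have hww : (fun i => w i * (w i)⁻¹) = fun _ => (1 : ℝ) :=
      funext fun i => mul_inv_cancel₀ (hw i).ne'
    rw [Matrix.diagonal_mul_diagonal, hww, Matrix.diagonal_one]
  have h2 : Matrix.diagonal w * (Matrix.diagonal (fun i => (w i)⁻¹) * V * Matrix.diagonal d * Vᵀ *
        Matrix.diagonal w) = V * Matrix.diagonal d * Vᵀ * Matrix.diagonal w := by
    simp only [← mul_assoc]
    rw [h1, one_mul]
  have h3 : ∀ z : Fin n → ℝ, wnorm2 w z = ∑ i, ((Matrix.diagonal w *ᵥ z) i) ^ 2 := by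
    intro z
    unfold wnorm2
    refine Finset.sum_congr rfl fun i _ => ?_
    rw [Matrix.mulVec_diagonal, mul_pow]
  rw [h3]
  simp only [Matrix.mulVec_mulVec]
  rw [h2, mul_assoc, mul_assoc, ← Matrix.mulVec_mulVec, orth_sum_sq V hV,
    ← Matrix.mulVec_mulVec, ← Matrix.mulVec_mulVec]
  refine Finset.sum_congr rfl fun i _ => ?_
  rw [Matrix.mulVec_diagonal, mul_pow]

theorem blis_W1_isometry {n J : ℕ} (hn : 1 ≤ n) (w : Fin n → ℝ) (hw : ∀ i, 0 < w i)
    (V : Matrix (Fin n) (Fin n) ℝ) (hV : Vᵀ * V = 1)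
    (lam : Fin n → ℝ) (hlam : ∀ i, lam i ∈ Set.Icc (0 : ℝ) 1)
    (s : Fin (J + 2) → ℕ) (hs0 : s 0 = 0) (hs1 : s 1 = 1) (hs : StrictMono s)
    (Ψ : Fin (J + 1) → Matrix (Fin n) (Fin n) ℝ)
    (hΨ : ∀ j : Fin (J + 1), Ψ j =
      Matrix.diagonal (fun i => (w i)⁻¹) * V *
        Matrix.diagonal (fun i => Real.sqrt ((lam i) ^ (s j.castSucc) - (lam i) ^ (s j.succ))) *
        Vᵀ * Matrix.diagonal w)
    (Φ : Matrix (Fin n) (Fin n) ℝ)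
    (hΦ : Φ = Matrix.diagonal (fun i => (w i)⁻¹) * V *
        Matrix.diagonal (fun i => Real.sqrt ((lam i) ^ (s (Fin.last (J + 1))))) *
        Vᵀ * Matrix.diagonal w)
    (x : Fin n → ℝ) :
    wnorm2 w (Φ *ᵥ x) + ∑ j : Fin (J + 1), wnorm2 w ((Ψ j) *ᵥ x) = wnorm2 w x := by
  set y : Fin n → ℝ := Vᵀ *ᵥ (Matrix.diagonal w *ᵥ x) with hy
  have hmono : ∀ (i : Fin n) (j : Fin (J + 1)),
      0 ≤ (lam i) ^ (s j.castSucc) - (lam i) ^ (s j.succ) := by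
    intro i j
    have h := hlam i
    have hle : s j.castSucc ≤ s j.succ := (hs (Fin.castSucc_lt_succ : j.castSucc < j.succ)).le
    exact sub_nonneg.mpr (pow_le_pow_of_le_one h.1 h.2 hle)
  have hΦterm : wnorm2 w (Φ *ᵥ x) = ∑ i, (lam i) ^ (s (Fin.last (J + 1))) * (y i) ^ 2 := by
    rw [hΦ, wnorm_key w hw V hV]
    refine Finset.sum_congr rfl fun i _ => ?_
    rw [Real.sq_sqrt (pow_nonneg (hlam i).1 _)]
  have hΨterm : ∀ j : Fin (J + 1), wnorm2 w ((Ψ j) *ᵥ x)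
      = ∑ i, ((lam i) ^ (s j.castSucc) - (lam i) ^ (s j.succ)) * (y i) ^ 2 := by
    intro j
    rw [hΨ j, wnorm_key w hw V hV]
    refine Finset.sum_congr rfl fun i _ => ?_
    rw [Real.sq_sqrt (hmono i j)]
  have hrhs : wnorm2 w x = ∑ i, (y i) ^ 2 := by
    have hVVt : V * Vᵀ = 1 := mul_eq_one_comm.mp hV
    have hVt : Vᵀᵀ * Vᵀ = 1 := by rw [Matrix.transpose_transpose]; exact hVVt
    rw [hy, orth_sum_sq Vᵀ hVt]
    unfold wnorm2
    refine Finset.sum_congr rfl fun i _ => ?_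
    rw [Matrix.mulVec_diagonal, mul_pow]
  rw [hΦterm, hrhs]
  simp only [hΨterm]
  rw [Finset.sum_comm, ← Finset.sum_add_distrib]
  refine Finset.sum_congr rfl fun i _ => ?_
  rw [← Finset.sum_mul]
  rw [fin_telescope (J + 1) (fun k => (lam i) ^ (s k))]
  have : (lam i) ^ (s 0) = 1 := by rw [hs0, pow_zero]
  rw [this]
  ring
end

section
/- Let n ≥ 1, let w ∈ ℝⁿ have strictly positive entries with W = diag(w), let V be an n×n real orthogonal matrix (VᵀV = I), let Λ = diag(λ₁,…,λₙ) with λᵢ ∈ [0,1], and set K = W⁻¹ V Λ Vᵀ W. Let s₀ = 0 < s₁ = 1 < s₂ < ⋯ < s_{J+1} be natural numbers, and define Ψⱼ⁽²⁾ = K^{sⱼ} − K^{s_{j+1}} for 0 ≤ j ≤ J and Φ_J⁽²⁾ = K^{s_{J+1}}. Then there exists a constant c > 0, depending only on s_{J+1} (one may take c = inf_{t∈[0,1]} ((1−t)² + t^{2 s_{J+1}})), such that for all x ∈ ℝⁿ: c‖x‖_w² ≤ ‖Φ_J⁽²⁾x‖_w² + Σ_{j=0}^{J} ‖Ψⱼ⁽²⁾x‖_w²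 ≤ ‖x‖_w². -/
open Matrix

private theorem tele (m : ℕ) (h : Fin (m+1) → ℝ) :
    ∑ j : Fin m, (h j.castSucc - h j.succ) = h 0 - h (Fin.last m) := by
  induction m with
  | zero => simp
  | succ m ih =>
    rw [Fin.sum_univ_castSucc]
    have h2 := ih (fun j => h j.castSucc)
    simp only [Fin.succ_castSucc]
    rw [h2, Fin.succ_last, Fin.castSucc_zero]
    ring

private theorem scalar_upper {J : ℕ} (s : Fin (J + 2) → ℕ) (hs0 : s 0 = 0) (hs : StrictMono s)
    (t : ℝ) (ht : t ∈ Set.Icc (0:ℝ) 1) :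
    (t ^ s (Fin.last (J + 1)))^2 + ∑ j : Fin (J + 1), (t ^ s j.castSucc - t ^ s j.succ)^2 ≤ 1 := by
  obtain ⟨ht0, ht1⟩ := ht
  have ha : ∀ j : Fin (J + 1), 0 ≤ t ^ s j.castSucc - t ^ s j.succ := fun j =>
    sub_nonneg.mpr (pow_le_pow_of_le_one ht0 ht1 (hs (Fin.castSucc_lt_succ : j.castSucc < j.succ)).le)
  have ha1 : ∀ j : Fin (J + 1), t ^ s j.castSucc - t ^ s j.succ ≤ 1 := fun j =>
    le_trans (by nlinarith [pow_nonneg ht0 (s j.succ)]) (pow_le_one₀ ht0 ht1)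
  have hb0 : (0:ℝ) ≤ t ^ s (Fin.last (J + 1)) := pow_nonneg ht0 _
  have hb1 : t ^ s (Fin.last (J + 1)) ≤ 1 := pow_le_one₀ ht0 ht1
  have htele : ∑ j : Fin (J + 1), (t ^ s j.castSucc - t ^ s j.succ)
      = 1 - t ^ s (Fin.last (J + 1)) := by
    rw [tele (J+1) (fun j => t ^ s j), hs0, pow_zero]
  have h1 : ∑ j : Fin (J + 1), (t ^ s j.castSucc - t ^ s j.succ)^2
      ≤ ∑ j : Fin (J + 1), (t ^ s j.castSucc - t ^ s j.succ) :=
    Finset.sum_le_sum fun j _ => by nlinarith [ha j, ha1 j]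
  nlinarith [h1, htele]

private theorem scalar_lower {J : ℕ} (s : Fin (J + 2) → ℕ) (hs0 : s 0 = 0) (hs1 : s 1 = 1)
    (hs : StrictMono s) (t : ℝ) (ht : t ∈ Set.Icc (0:ℝ) 1) :
    (1/2 : ℝ) ^ (2 * s (Fin.last (J + 1))) ≤
      (t ^ s (Fin.last (J + 1)))^2 + ∑ j : Fin (J + 1), (t ^ s j.castSucc - t ^ s j.succ)^2 := by
  obtain ⟨ht0, ht1⟩ := ht
  set M := s (Fin.last (J + 1)) with hM
  have hM1 : 1 ≤ M := hs1 ▸ hs.monotone (Fin.le_last 1)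
  have h0 : ((0 : Fin (J+1)).castSucc : Fin (J+2)) = 0 := Fin.castSucc_zero
  have h0' : ((0 : Fin (J+1)).succ : Fin (J+2)) = 1 := Fin.succ_zero_eq_one
  have hsum : (1 - t)^2 ≤ ∑ j : Fin (J + 1), (t ^ s j.castSucc - t ^ s j.succ)^2 := by
    have := Finset.single_le_sum (f := fun j : Fin (J+1) => (t ^ s j.castSucc - t ^ s j.succ)^2)
      (fun j _ => sq_nonneg _) (Finset.mem_univ 0)
    simp only [h0, h0', hs0, hs1, pow_zero, pow_one] at this
    exact this
  rcases le_total t (1/2) with h | h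
  · have e1 : (1/2:ℝ) ^ (2 * M) ≤ (1/2:ℝ) ^ 2 :=
      pow_le_pow_of_le_one (by norm_num) (by norm_num) (by omega)
    have e2 : (1/2:ℝ)^2 ≤ (1 - t)^2 := by nlinarith
    nlinarith [sq_nonneg (t ^ M), hsum]
  · have e1 : (1/2:ℝ) ^ M ≤ t ^ M := pow_le_pow_left₀ (by norm_num) h M
    have e2 : (1/2:ℝ) ^ (2 * M) = ((1/2:ℝ)^M)^2 := by rw [mul_comm, pow_mul]
    have e3 : ((1/2:ℝ)^M)^2 ≤ (t^M)^2 := by nlinarith [pow_nonneg (show (0:ℝ) ≤ 1/2 by norm_num) M]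
    calc (1/2:ℝ) ^ (2*M) = ((1/2:ℝ)^M)^2 := e2
      _ ≤ (t^M)^2 := e3
      _ ≤ _ := le_add_of_nonneg_right (Finset.sum_nonneg fun j _ => sq_nonneg _)

private theorem orth_dot {n : ℕ} (V : Matrix (Fin n) (Fin n) ℝ) (hV : Vᵀ * V = 1)
    (v : Fin n → ℝ) : (V *ᵥ v) ⬝ᵥ (V *ᵥ v) = v ⬝ᵥ v := by
  rw [dotProduct_mulVec, ← vecMul_transpose, vecMul_vecMul, hV, vecMul_one]

private theorem key {n : ℕ} (w : Fin n → ℝ) (hw : ∀ i, 0 < w i) (V : Matrix (Fin n) (Fin n) ℝ)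
    (hV : Vᵀ * V = 1) (d : Fin n → ℝ) (x : Fin n → ℝ) :
    wnorm2 w ((Matrix.diagonal (fun i => (w i)⁻¹) * V * Matrix.diagonal d * Vᵀ * Matrix.diagonal w) *ᵥ x)
      = ∑ i, (d i)^2 * ((Vᵀ *ᵥ (Matrix.diagonal w *ᵥ x)) i)^2 := by
  set y := Vᵀ *ᵥ (Matrix.diagonal w *ᵥ x) with hy
  set v := Matrix.diagonal d *ᵥ y with hvdef
  have hM : (Matrix.diagonal (fun i => (w i)⁻¹) * V * Matrix.diagonal d * Vᵀ * Matrix.diagonal w) *ᵥ x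
      = Matrix.diagonal (fun i => (w i)⁻¹) *ᵥ (V *ᵥ v) := by
    simp [hvdef, hy, mulVec_mulVec, Matrix.mul_assoc]
  rw [hM]
  have h1 : wnorm2 w (Matrix.diagonal (fun i => (w i)⁻¹) *ᵥ (V *ᵥ v))
      = (V *ᵥ v) ⬝ᵥ (V *ᵥ v) := by
    unfold wnorm2
    rw [dotProduct]
    refine Finset.sum_congr rfl fun i _ => ?_
    rw [mulVec_diagonal]
    have : w i ≠ 0 := (hw i).ne'
    field_simp
  rw [h1, orth_dot V hV, dotProduct]
  refine Finset.sum_congr rfl fun i _ => ?_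
  rw [hvdef, mulVec_diagonal]
  ring

private theorem ynorm {n : ℕ} (w : Fin n → ℝ) (V : Matrix (Fin n) (Fin n) ℝ)
    (hV : Vᵀ * V = 1) (x : Fin n → ℝ) :
    ∑ i, ((Vᵀ *ᵥ (Matrix.diagonal w *ᵥ x)) i)^2 = wnorm2 w x := by
  have h1 : ∑ i, ((Vᵀ *ᵥ (Matrix.diagonal w *ᵥ x)) i)^2
      = (Vᵀ *ᵥ (Matrix.diagonal w *ᵥ x)) ⬝ᵥ (Vᵀ *ᵥ (Matrix.diagonal w *ᵥ x)) := by
    rw [dotProduct]; exact Finset.sum_congr rfl fun i _ => (sq _)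
  rw [h1, orth_dot Vᵀ (by rw [transpose_transpose]; exact mul_eq_one_comm.mp hV),
    dotProduct]
  unfold wnorm2
  refine Finset.sum_congr rfl fun i _ => ?_
  rw [mulVec_diagonal]; ring

private theorem Kpow {n : ℕ} (w : Fin n → ℝ) (hw : ∀ i, 0 < w i) (V : Matrix (Fin n) (Fin n) ℝ)
    (hV : Vᵀ * V = 1) (lam : Fin n → ℝ) (K : Matrix (Fin n) (Fin n) ℝ)
    (hK : K = Matrix.diagonal (fun i => (w i)⁻¹) * V * Matrix.diagonal lam * Vᵀ *
        Matrix.diagonal w) (m : ℕ) :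
    K ^ m = Matrix.diagonal (fun i => (w i)⁻¹) * V * Matrix.diagonal (fun i => lam i ^ m) * Vᵀ *
        Matrix.diagonal w := by
  have hWW : (Matrix.diagonal w : Matrix (Fin n) (Fin n) ℝ) * Matrix.diagonal (fun i => (w i)⁻¹) = 1 := by
    rw [diagonal_mul_diagonal,
      show (fun i => w i * (w i)⁻¹) = fun _ : Fin n => (1:ℝ) from
        funext fun i => mul_inv_cancel₀ (hw i).ne', diagonal_one]
  have hVVt : V * Vᵀ = 1 := mul_eq_one_comm.mp hV
  have hWWc : ∀ X : Matrix (Fin n) (Fin n) ℝ, Matrix.diagonal w * (Matrix.diagonal (fun i => (w i)⁻¹) * X) = X := by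
    intro X; rw [← Matrix.mul_assoc, hWW, Matrix.one_mul]
  have hVc : ∀ X : Matrix (Fin n) (Fin n) ℝ, Vᵀ * (V * X) = X := by
    intro X; rw [← Matrix.mul_assoc, hV, Matrix.one_mul]
  induction m with
  | zero =>
    simp only [pow_zero]
    rw [show (Matrix.diagonal (fun _ : Fin n => (1:ℝ))) = 1 from diagonal_one, Matrix.mul_one,
      Matrix.mul_assoc _ V Vᵀ, hVVt, Matrix.mul_one, diagonal_mul_diagonal,
      show (fun i => (w i)⁻¹ * w i) = fun _ : Fin n => (1:ℝ) from
        funext fun i => inv_mul_cancel₀ (hw i).ne', diagonal_one]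
  | succ m ih =>
    rw [pow_succ, ih, hK]
    simp only [Matrix.mul_assoc]
    rw [hWWc, hVc, ← Matrix.mul_assoc (Matrix.diagonal fun i => lam i ^ m),
      diagonal_mul_diagonal]
    congr 2

theorem blis_W2_frame {n J : ℕ} (hn : 1 ≤ n) (w : Fin n → ℝ) (hw : ∀ i, 0 < w i)
    (V : Matrix (Fin n) (Fin n) ℝ) (hV : Vᵀ * V = 1)
    (lam : Fin n → ℝ) (hlam : ∀ i, lam i ∈ Set.Icc (0 : ℝ) 1)
    (K : Matrix (Fin n) (Fin n) ℝ)
    (hK : K = Matrix.diagonal (fun i => (w i)⁻¹) * V * Matrix.diagonal lam * Vᵀ *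
        Matrix.diagonal w)
    (s : Fin (J + 2) → ℕ) (hs0 : s 0 = 0) (hs1 : s 1 = 1) (hs : StrictMono s)
    (Ψ : Fin (J + 1) → Matrix (Fin n) (Fin n) ℝ)
    (hΨ : ∀ j : Fin (J + 1), Ψ j = K ^ (s j.castSucc) - K ^ (s j.succ))
    (Φ : Matrix (Fin n) (Fin n) ℝ) (hΦ : Φ = K ^ (s (Fin.last (J + 1)))) :
    ∃ c : ℝ, 0 < c ∧ ∀ x : Fin n → ℝ,
      c * wnorm2 w x ≤ wnorm2 w (Φ *ᵥ x) + ∑ j : Fin (J + 1), wnorm2 w ((Ψ j) *ᵥ x) ∧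
      wnorm2 w (Φ *ᵥ x) + ∑ j : Fin (J + 1), wnorm2 w ((Ψ j) *ᵥ x) ≤ wnorm2 w x := by
  refine ⟨(1/2 : ℝ) ^ (2 * s (Fin.last (J + 1))), pow_pos (by norm_num) _, fun x => ?_⟩
  set y := Vᵀ *ᵥ (Matrix.diagonal w *ᵥ x) with hy
  have hΨd : ∀ j : Fin (J+1), wnorm2 w ((Ψ j) *ᵥ x)
      = ∑ i, (lam i ^ s j.castSucc - lam i ^ s j.succ)^2 * (y i)^2 := by
    intro j
    have hmat : Ψ j = Matrix.diagonal (fun i => (w i)⁻¹) * V *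
        Matrix.diagonal (fun i => lam i ^ s j.castSucc - lam i ^ s j.succ) * Vᵀ *
        Matrix.diagonal w := by
      rw [hΨ j, Kpow w hw V hV lam K hK, Kpow w hw V hV lam K hK,
        ← Matrix.sub_mul, ← Matrix.sub_mul, ← Matrix.mul_sub, ← diagonal_sub]
    rw [hmat]
    exact key w hw V hV _ x
  have hΦd : wnorm2 w (Φ *ᵥ x) = ∑ i, (lam i ^ s (Fin.last (J+1)))^2 * (y i)^2 := by
    rw [hΦ, Kpow w hw V hV lam K hK]
    exact key w hw V hV _ x
  have hxd : wnorm2 w x = ∑ i, (y i)^2 := (ynorm w V hV x).symm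
  have hsum : wnorm2 w (Φ *ᵥ x) + ∑ j : Fin (J+1), wnorm2 w ((Ψ j) *ᵥ x)
      = ∑ i, ((lam i ^ s (Fin.last (J+1)))^2
          + ∑ j : Fin (J+1), (lam i ^ s j.castSucc - lam i ^ s j.succ)^2) * (y i)^2 := by
    rw [hΦd]
    simp only [hΨd]
    rw [Finset.sum_comm, ← Finset.sum_add_distrib]
    refine Finset.sum_congr rfl fun i _ => ?_
    rw [add_mul, Finset.sum_mul]
  rw [hsum, hxd]
  constructor
  · rw [Finset.mul_sum]
    exact Finset.sum_le_sum fun i _ =>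
      mul_le_mul_of_nonneg_right (scalar_lower s hs0 hs1 hs (lam i) (hlam i)) (sq_nonneg _)
  · calc ∑ i, ((lam i ^ s (Fin.last (J+1)))^2
          + ∑ j : Fin (J+1), (lam i ^ s j.castSucc - lam i ^ s j.succ)^2) * (y i)^2
        ≤ ∑ i, 1 * (y i)^2 := Finset.sum_le_sum fun i _ =>
          mul_le_mul_of_nonneg_right (scalar_upper s hs0 hs (lam i) (hlam i)) (sq_nonneg _)
      _ = ∑ i, (y i)^2 := by simp
end

section
/- Let K be an n×n real matrix, let s₀ = 0 < s₁ = 1 < s₂ < ⋯ < s_{J+1} be natural numbers, and define Ψⱼ = K^{sⱼ} − K^{s_{j+1}} for 0 ≤ j ≤ J. Suppose there exist nonzero vectors u₁, u₂ ∈ ℝⁿ with K u₁ = u₁ and K u₂ = 0. Set x₁ = u₁ + u₂ and x₂ = u₁ − u₂. Then x₁ ≠ x₂ and x₁ ≠ −x₂, yet |Ψⱼ x₁| = |Ψⱼ x₂| entrywise for every 0 ≤ j ≤ J. (In fact Ψⱼ x₁ = Ψⱼ x₂ = 0 for 1 ≤ j ≤ J, and Ψ₀ x₁ = u₂ = −Ψ₀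 x₂.) -/
open Matrix

theorem scattering_not_injective_bipartite {n J : ℕ}
    (K : Matrix (Fin n) (Fin n) ℝ)
    (s : Fin (J + 2) → ℕ) (hs0 : s 0 = 0) (hs1 : s 1 = 1) (hs : StrictMono s)
    (u₁ u₂ : Fin n → ℝ) (hu₁ : u₁ ≠ 0) (hu₂ : u₂ ≠ 0)
    (hKu₁ : K *ᵥ u₁ = u₁) (hKu₂ : K *ᵥ u₂ = 0)
    (x₁ x₂ : Fin n → ℝ) (hx₁ : x₁ = u₁ + u₂) (hx₂ : x₂ = u₁ - u₂) :
    x₁ ≠ x₂ ∧ x₁ ≠ -x₂ ∧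
    (∀ j : Fin (J + 1), ∀ i,
      |((K ^ (s j.castSucc) - K ^ (s j.succ)) *ᵥ x₁) i| =
        |((K ^ (s j.castSucc) - K ^ (s j.succ)) *ᵥ x₂) i|) ∧
    (∀ j : Fin (J + 1), j ≠ 0 →
      (K ^ (s j.castSucc) - K ^ (s j.succ)) *ᵥ x₁ = 0 ∧
      (K ^ (s j.castSucc) - K ^ (s j.succ)) *ᵥ x₂ = 0) ∧
    (K ^ (s (0 : Fin (J + 1)).castSucc) - K ^ (s (0 : Fin (J + 1)).succ)) *ᵥ x₁ = u₂ ∧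
    (K ^ (s (0 : Fin (J + 1)).castSucc) - K ^ (s (0 : Fin (J + 1)).succ)) *ᵥ x₂ = -u₂ := by
  have h1 : ∀ m : ℕ, K ^ m *ᵥ u₁ = u₁ := by
    intro m
    induction m with
    | zero => simp
    | succ m ih => rw [pow_succ', ← Matrix.mulVec_mulVec, ih, hKu₁]
  have h2 : ∀ m : ℕ, 1 ≤ m → K ^ m *ᵥ u₂ = 0 := by
    intro m hm
    obtain ⟨k, rfl⟩ := Nat.exists_eq_add_of_le hm
    rw [add_comm, pow_succ, ← Matrix.mulVec_mulVec, hKu₂, Matrix.mulVec_zero]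
  -- zero case
  have hc0 : s ((0 : Fin (J + 1)).castSucc) = 0 := by simpa using hs0
  have hc1 : s ((0 : Fin (J + 1)).succ) = 1 := by simpa using hs1
  have hΨ0x₁ : (K ^ (s (0 : Fin (J + 1)).castSucc) - K ^ (s (0 : Fin (J + 1)).succ)) *ᵥ x₁ = u₂ := by
    rw [hc0, hc1, pow_zero, pow_one, Matrix.sub_mulVec, hx₁, Matrix.one_mulVec,
      Matrix.mulVec_add, hKu₁, hKu₂, add_zero]
    abel
  have hΨ0x₂ : (K ^ (s (0 : Fin (J + 1)).castSucc) - K ^ (s (0 : Fin (J + 1)).succ)) *ᵥ x₂ = -u₂ := by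
    rw [hc0, hc1, pow_zero, pow_one, Matrix.sub_mulVec, hx₂, Matrix.one_mulVec,
      Matrix.mulVec_sub, hKu₁, hKu₂, sub_zero]
    abel
  have hne : ∀ j : Fin (J + 1), j ≠ 0 →
      (K ^ (s j.castSucc) - K ^ (s j.succ)) *ᵥ x₁ = 0 ∧
      (K ^ (s j.castSucc) - K ^ (s j.succ)) *ᵥ x₂ = 0 := by
    intro j hj
    have hcs : (0 : Fin (J + 2)) < j.castSucc := by
      simpa using (Fin.pos_of_ne_zero hj)
    have hlt1 : 1 ≤ s j.castSucc := by
      have := hs hcs; omega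
    have hlt2 : 1 ≤ s j.succ := by
      have : s j.castSucc < s j.succ := hs (Fin.castSucc_lt_succ : j.castSucc < j.succ)
      omega
    constructor <;>
      [rw [Matrix.sub_mulVec, hx₁, Matrix.mulVec_add, Matrix.mulVec_add];
       rw [Matrix.sub_mulVec, hx₂, Matrix.mulVec_sub, Matrix.mulVec_sub]] <;>
      rw [h1, h1, h2 _ hlt1, h2 _ hlt2] <;> abel
  refine ⟨?_, ?_, ?_, hne, hΨ0x₁, hΨ0x₂⟩
  · intro h
    apply hu₂
    have : u₁ + u₂ = u₁ - u₂ := by rw [← hx₁, ← hx₂, h]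
    have h2 : u₂ = -u₂ := by
      have := sub_eq_zero.mpr this
      funext i
      have := congrFun this i
      simp [Pi.add_apply, Pi.sub_apply] at this ⊢
      linarith [congrFun (sub_eq_zero.mpr ‹u₁ + u₂ = u₁ - u₂›) i]
    funext i
    have := congrFun h2 i
    simp at this ⊢
    linarith
  · intro h
    apply hu₁
    have : u₁ + u₂ = -(u₁ - u₂) := by rw [← hx₁, ← hx₂, h]
    funext i
    have := congrFun this i
    simp [Pi.add_apply, Pi.sub_apply, Pi.neg_apply] at this ⊢
    linarith
  · intro j i
    by_cases hj : j = 0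
    · subst hj
      rw [hΨ0x₁, hΨ0x₂, Pi.neg_apply, abs_neg]
    · rw [(hne j hj).1, (hne j hj).2]
end

section
/- Let G be a simple graph on vertex set {1,…,n}, and let K be an n×n real matrix such that K_{uv} = 0 whenever u ≠ v and {u,v} is not an edge of G. Let s₀ = 0 < s₁ = 1 < ⋯ < s_{J+1} be natural numbers and define Ψⱼ = K^{sⱼ} − K^{s_{j+1}} for 0 ≤ j ≤ J. Let S₁, S₂ be nonempty disjoint subsets of vertices such that every u ∈ S₁ and v ∈ S₂ satisfy: either u and v are not connected in G, or the graph distance d(u,v) ≥ 2 s_{J+1} + 1. Set x₁ = δ_{S₁} + δ_{S₂} and x₂ = δ_{S₁} − δ_{S₂}, where δ_S is the indicator vector of S. Then x₁ ≠ x₂ and x₁ ≠ −x₂, yet |Ψⱼ x₁| = |Ψⱼ x₂| entrywise for every 0 ≤ j ≤ J. -/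
open Matrix

/-!
A matrix supported on the edges of `G` (and the diagonal) moves mass by at most one step, so
`K ^ m`, and hence every `Ψⱼ`, only couples vertices at distance at most `L = s_{J+1}`. Since `S₁`
and `S₂` are more than `2L` apart, at each vertex at most one of `Ψⱼ δ_{S₁}` and `Ψⱼ δ_{S₂}` is
nonzero, so `Ψⱼ (δ_{S₁} + δ_{S₂})` and `Ψⱼ (δ_{S₁} - δ_{S₂})` agree up to sign entrywise.
-/

lemma SimpleGraph.lt_edist_of_not_reachable_or_lt_dist {V : Type*} {G : SimpleGraph V}
    {u v : V} {k : ℕ} (h : ¬ G.Reachable u v ∨ k < G.dist u v) : k < G.edist u v := by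
  rcases h with h | h
  · simp [G.edist_eq_top_of_not_reachable h]
  · rw [← (Reachable.of_dist_ne_zero h.ne_bot).coe_dist_eq_edist]
    exact_mod_cast h

namespace Matrix

variable {V R : Type*} (G : SimpleGraph V)

def IsLocal [Zero R] (L : ℕ) (M : Matrix V V R) : Prop :=
  ∀ i u, M i u ≠ 0 → G.edist i u ≤ L

variable {G}

lemma isLocal_one_of_eq_zero_of_not_adj [Zero R] {K : Matrix V V R}
    (hK : ∀ u v, u ≠ v → ¬ G.Adj u v → K u v = 0) : K.IsLocal G 1 := by
  intro i u hiu
  rw [Nat.cast_one, SimpleGraph.edist_le_one_iff_adj_or_eq]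
  by_contra! h
  exact hiu (hK i u h.2 h.1)

lemma isLocal_one [DecidableEq V] [Zero R] [One R] : (1 : Matrix V V R).IsLocal G 0 := by
  intro i u hiu
  obtain rfl : i = u := by_contra fun h => hiu (one_apply_ne h)
  simp

namespace IsLocal

lemma mono [Zero R] {M : Matrix V V R} {L L' : ℕ} (hM : M.IsLocal G L) (h : L ≤ L') :
    M.IsLocal G L' :=
  fun i u hiu => (hM i u hiu).trans (by exact_mod_cast h)

lemma mul [Fintype V] [NonUnitalNonAssocSemiring R] {A B : Matrix V V R} {a b : ℕ}
    (hA : A.IsLocal G a) (hB : B.IsLocal G b) : (A * B).IsLocal G (a + b) := by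
  intro i u hiu
  obtain ⟨w, -, hw⟩ := Finset.exists_ne_zero_of_sum_ne_zero hiu
  calc G.edist i u ≤ G.edist i w + G.edist w u := G.edist_triangle
    _ ≤ a + b := add_le_add (hA i w (left_ne_zero_of_mul hw)) (hB w u (right_ne_zero_of_mul hw))
    _ = (a + b : ℕ) := by push_cast; rfl

lemma sub [AddGroup R] {A B : Matrix V V R} {L : ℕ} (hA : A.IsLocal G L) (hB : B.IsLocal G L) :
    (A - B).IsLocal G L := by
  intro i u hiu
  by_cases hAiu : A i u = 0
  · exact hB i u fun hBiu => hiu (by simp [hAiu, hBiu])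
  · exact hA i u hAiu

lemma pow [Fintype V] [DecidableEq V] [Semiring R] {K : Matrix V V R} (hK : K.IsLocal G 1)
    (m : ℕ) :
    (K ^ m).IsLocal G m := by
  induction m with
  | zero => simpa using isLocal_one
  | succ m ih => simpa [pow_succ] using ih.mul hK

lemma exists_ne_zero_of_mulVec_apply_ne_zero [Fintype V] [NonUnitalNonAssocSemiring R]
    {M : Matrix V V R} {L : ℕ} (hM : M.IsLocal G L) {x : V → R} {i : V} (h : (M *ᵥ x) i ≠ 0) :
    ∃ u, x u ≠ 0 ∧ G.edist i u ≤ L := by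
  obtain ⟨u, -, hu⟩ := Finset.exists_ne_zero_of_sum_ne_zero h
  exact ⟨u, right_ne_zero_of_mul hu, hM i u (left_ne_zero_of_mul hu)⟩

lemma mulVec_apply_eq_zero_or [Fintype V] [NonUnitalNonAssocSemiring R] {M : Matrix V V R}
    {L : ℕ} (hM : M.IsLocal G L) {x y : V → R}
    (hxy : ∀ u v, x u ≠ 0 → y v ≠ 0 → 2 * L < G.edist u v) (i : V) :
    (M *ᵥ x) i = 0 ∨ (M *ᵥ y) i = 0 := by
  by_contra! h
  obtain ⟨u, hxu, hiu⟩ := hM.exists_ne_zero_of_mulVec_apply_ne_zero h.1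
  obtain ⟨v, hyv, hiv⟩ := hM.exists_ne_zero_of_mulVec_apply_ne_zero h.2
  have : G.edist u v ≤ 2 * L :=
    calc G.edist u v ≤ G.edist u i + G.edist i v := G.edist_triangle
      _ ≤ L + L := add_le_add (G.edist_comm ▸ hiu) hiv
      _ = 2 * L := by rw [two_mul]
  exact (hxy u v hxu hyv).not_ge this

lemma abs_mulVec_add_eq_abs_mulVec_sub [Fintype V] [Ring R] [LinearOrder R] [IsOrderedRing R]
    {M : Matrix V V R} {L : ℕ} (hM : M.IsLocal G L) {x y : V → R}
    (hxy : ∀ u v, x u ≠ 0 → y v ≠ 0 → 2 * L < G.edist u v) (i : V) :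
    |(M *ᵥ (x + y)) i| = |(M *ᵥ (x - y)) i| := by
  rw [mulVec_add, mulVec_sub, Pi.add_apply, Pi.sub_apply]
  rcases hM.mulVec_apply_eq_zero_or hxy i with h | h <;> simp [h]

end IsLocal

end Matrix

lemma add_ne_sub_of_ne_zero {M : Type*} [AddGroup M] [IsAddTorsionFree M] (a : M) {b : M}
    (hb : b ≠ 0) : a + b ≠ a - b := fun h =>
  hb (self_eq_neg.mp (add_left_cancel (h.trans (sub_eq_add_neg a b))))

lemma add_ne_neg_sub_of_ne_zero {M : Type*} [AddCommGroup M] [IsAddTorsionFree M] {a : M}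
    (b : M) (ha : a ≠ 0) : a + b ≠ -(a - b) := fun h =>
  ha (self_eq_neg.mp (add_right_cancel (h.trans (by abel))))

theorem scattering_not_injective_large_diameter_general {n J : ℕ}
    (G : SimpleGraph (Fin n)) (K : Matrix (Fin n) (Fin n) ℝ)
    (hK : ∀ u v : Fin n, u ≠ v → ¬ G.Adj u v → K u v = 0)
    (s : Fin (J + 2) → ℕ) (hs : StrictMono s)
    (S₁ S₂ : Finset (Fin n)) (hS₁ : S₁.Nonempty) (hS₂ : S₂.Nonempty)
    (hfar : ∀ u ∈ S₁, ∀ v ∈ S₂,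
      ¬ G.Reachable u v ∨ 2 * s (Fin.last (J + 1)) + 1 ≤ G.dist u v)
    (x₁ x₂ : Fin n → ℝ)
    (hx₁ : x₁ = (fun v => if v ∈ S₁ then (1 : ℝ) else 0) +
        (fun v => if v ∈ S₂ then (1 : ℝ) else 0))
    (hx₂ : x₂ = (fun v => if v ∈ S₁ then (1 : ℝ) else 0) -
        (fun v => if v ∈ S₂ then (1 : ℝ) else 0)) :
    x₁ ≠ x₂ ∧ x₁ ≠ -x₂ ∧
    ∀ j : Fin (J + 1), ∀ i,
      |((K ^ (s j.castSucc) - K ^ (s j.succ)) *ᵥ x₁) i| =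
        |((K ^ (s j.castSucc) - K ^ (s j.succ)) *ᵥ x₂) i| := by
  have mem_of_ne_zero {S : Finset (Fin n)} {v} (h : (if v ∈ S then (1 : ℝ) else 0) ≠ 0) :
      v ∈ S := by
    by_contra hv
    exact h (if_neg hv)
  have indicator_ne_zero {S : Finset (Fin n)} (hS : S.Nonempty) :
      (fun v => if v ∈ S then (1 : ℝ) else 0) ≠ 0 := fun h => by
    obtain ⟨v, hv⟩ := hS
    simpa [hv] using congrFun h v
  subst hx₁ hx₂
  refine ⟨add_ne_sub_of_ne_zero _ (indicator_ne_zero hS₂),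
    add_ne_neg_sub_of_ne_zero _ (indicator_ne_zero hS₁), fun j i => ?_⟩
  have hpow (m : Fin (J + 2)) : (K ^ s m).IsLocal G (s (Fin.last (J + 1))) :=
    ((isLocal_one_of_eq_zero_of_not_adj hK).pow _).mono (hs.monotone (Fin.le_last m))
  refine ((hpow _).sub (hpow _)).abs_mulVec_add_eq_abs_mulVec_sub (fun u v hu hv => ?_) i
  exact_mod_cast SimpleGraph.lt_edist_of_not_reachable_or_lt_dist
    (hfar u (mem_of_ne_zero hu) v (mem_of_ne_zero hv))

theorem scattering_not_injective_large_diameter {n J : ℕ}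
    (G : SimpleGraph (Fin n)) (K : Matrix (Fin n) (Fin n) ℝ)
    (hK : ∀ u v : Fin n, u ≠ v → ¬ G.Adj u v → K u v = 0)
    (s : Fin (J + 2) → ℕ) (hs0 : s 0 = 0) (hs1 : s 1 = 1) (hs : StrictMono s)
    (S₁ S₂ : Finset (Fin n)) (hS₁ : S₁.Nonempty) (hS₂ : S₂.Nonempty)
    (hdisj : Disjoint S₁ S₂)
    (hfar : ∀ u ∈ S₁, ∀ v ∈ S₂,
      ¬ G.Reachable u v ∨ 2 * s (Fin.last (J + 1)) + 1 ≤ G.dist u v)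
    (x₁ x₂ : Fin n → ℝ)
    (hx₁ : x₁ = (fun v => if v ∈ S₁ then (1 : ℝ) else 0) +
        (fun v => if v ∈ S₂ then (1 : ℝ) else 0))
    (hx₂ : x₂ = (fun v => if v ∈ S₁ then (1 : ℝ) else 0) -
        (fun v => if v ∈ S₂ then (1 : ℝ) else 0)) :
    x₁ ≠ x₂ ∧ x₁ ≠ -x₂ ∧
    ∀ j : Fin (J + 1), ∀ i,
      |((K ^ (s j.castSucc) - K ^ (s j.succ)) *ᵥ x₁) i| =
        |((K ^ (s j.castSucc) - K ^ (s j.succ)) *ᵥ x₂) i| :=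
  scattering_not_injective_large_diameter_general G K hK s hs S₁ S₂ hS₁ hS₂ hfar x₁ x₂ hx₁ hx₂
end

section
/- Let w ∈ ℝⁿ have strictly positive entries and let F₀,…,F_{J+1} be n×n real matrices forming a frame with bounds 0 < c ≤ C, i.e., c‖x‖_w² ≤ Σ_{j=0}^{J+1} ‖F_j x‖_w² ≤ C‖x‖_w² for all x ∈ ℝⁿ. Then for every m ≥ 1 and all x, y ∈ ℝⁿ: (c/2)^m ‖x − y‖_w² ≤ Σ over all tuples (j₁,k₁,…,j_m,k_m) with jᵢ ∈ {0,…,J+1}, kᵢ ∈ {1,2} of ‖B[j₁,k₁,…,j_m,k_m](x) − B[j₁,k₁,…,j_m,k_m](y)‖_w² ≤ C^m ‖x − y‖_w². That is, the m-layer BLIS module B_m is bi-Lipschitz on the weighted space. -/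
open Matrix

def act {n : ℕ} (k : Fin 2) (x : Fin n → ℝ) : Fin n → ℝ :=
  if k = 0 then (fun i => max (x i) 0) else (fun i => max (-(x i)) 0)

noncomputable def blis {n N : ℕ} (F : Fin N → Matrix (Fin n) (Fin n) ℝ) :
    (m : ℕ) → (Fin m → Fin N) → (Fin m → Fin 2) → (Fin n → ℝ) → Fin n → ℝ
  | 0, _, _, x => x
  | m + 1, js, ks, x =>
      act (ks (Fin.last m)) ((F (js (Fin.last m))) *ᵥ blis F m (Fin.init js) (Fin.init ks) x)

/-!
Since `a = a⁺ - a⁻`, the two activations split each coordinate difference `a - b` into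
`p - q` with `p = a⁺ - b⁺`, `q = a⁻ - b⁻` and `p q ≤ 0`, so that
`(a - b)² / 2 ≤ p² + q² ≤ (a - b)²`. Summed over coordinates, one layer `u ↦ σₖ(Fⱼ u)`
therefore distorts squared distances by a factor in `[c / 2, C]`, and the two bounds on the
`m`-layer module follow by induction on `m`, peeling off the last layer.
-/

lemma posPart_sub_posPart_mul_negPart_sub_negPart_nonpos (a b : ℝ) :
    (a⁺ - b⁺) * (a⁻ - b⁻) ≤ 0 := by
  rcases le_total a b with hab | hab
  · exact mul_nonpos_of_nonpos_of_nonneg (sub_nonpos.2 (posPart_mono hab))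
      (sub_nonneg.2 (negPart_anti hab))
  · exact mul_nonpos_of_nonneg_of_nonpos (sub_nonneg.2 (posPart_mono hab))
      (sub_nonpos.2 (negPart_anti hab))

lemma posPart_sub_posPart_sub_negPart_sub_negPart (a b : ℝ) :
    (a⁺ - b⁺) - (a⁻ - b⁻) = a - b := by
  linarith [posPart_sub_negPart a, posPart_sub_negPart b]

lemma sq_posPart_sub_add_sq_negPart_sub_le (a b : ℝ) :
    (a⁺ - b⁺) ^ 2 + (a⁻ - b⁻) ^ 2 ≤ (a - b) ^ 2 := by
  rw [← posPart_sub_posPart_sub_negPart_sub_negPart a b]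
  nlinarith [posPart_sub_posPart_mul_negPart_sub_negPart_nonpos a b]

lemma sq_sub_le_two_mul_sq_posPart_sub_add_sq_negPart_sub (a b : ℝ) :
    (a - b) ^ 2 ≤ 2 * ((a⁺ - b⁺) ^ 2 + (a⁻ - b⁻) ^ 2) := by
  rw [← posPart_sub_posPart_sub_negPart_sub_negPart a b]
  nlinarith [sq_nonneg (a⁺ - b⁺ + (a⁻ - b⁻))]

section Weighted

variable {n : ℕ} (w : Fin n → ℝ)

lemma act_zero (x : Fin n → ℝ) : act 0 x = x⁺ := rfl

lemma act_one (x : Fin n → ℝ) : act 1 x = x⁻ := rfl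

lemma sum_wnorm2_act_sub (u v : Fin n → ℝ) :
    ∑ k : Fin 2, wnorm2 w (act k u - act k v) =
      ∑ i, w i ^ 2 * (((u i)⁺ - (v i)⁺) ^ 2 + ((u i)⁻ - (v i)⁻) ^ 2) := by
  simp only [Fin.sum_univ_two, act_zero, act_one, wnorm2, ← Finset.sum_add_distrib, mul_add,
    Pi.sub_apply, Pi.posPart_apply, Pi.negPart_apply]

lemma sum_wnorm2_act_sub_le (u v : Fin n → ℝ) :
    ∑ k : Fin 2, wnorm2 w (act k u - act k v) ≤ wnorm2 w (u - v) := by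
  rw [sum_wnorm2_act_sub]
  exact Finset.sum_le_sum fun i _ =>
    mul_le_mul_of_nonneg_left (sq_posPart_sub_add_sq_negPart_sub_le _ _) (sq_nonneg _)

lemma wnorm2_sub_le_two_mul_sum_wnorm2_act_sub (u v : Fin n → ℝ) :
    wnorm2 w (u - v) ≤ 2 * ∑ k : Fin 2, wnorm2 w (act k u - act k v) := by
  rw [sum_wnorm2_act_sub, Finset.mul_sum]
  refine Finset.sum_le_sum fun i _ => ?_
  rw [mul_left_comm]
  exact mul_le_mul_of_nonneg_left
    (sq_sub_le_two_mul_sq_posPart_sub_add_sq_negPart_sub _ _) (sq_nonneg _)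

variable {N : ℕ} (F : Fin N → Matrix (Fin n) (Fin n) ℝ)

noncomputable def layerDist (u v : Fin n → ℝ) : ℝ :=
  ∑ j, ∑ k : Fin 2, wnorm2 w (act k (F j *ᵥ u) - act k (F j *ᵥ v))

noncomputable def blisDist (m : ℕ) (x y : Fin n → ℝ) : ℝ :=
  ∑ js : Fin m → Fin N, ∑ ks : Fin m → Fin 2, wnorm2 w (blis F m js ks x - blis F m js ks y)

lemma layerDist_le {C : ℝ} (hC : ∀ x, ∑ j, wnorm2 w (F j *ᵥ x) ≤ C * wnorm2 w x)
    (u v : Fin n → ℝ) : layerDist w F u v ≤ C * wnorm2 w (u - v) :=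
  calc layerDist w F u v ≤ ∑ j, wnorm2 w (F j *ᵥ u - F j *ᵥ v) :=
        Finset.sum_le_sum fun j _ => sum_wnorm2_act_sub_le w _ _
    _ = ∑ j, wnorm2 w (F j *ᵥ (u - v)) := by simp only [mulVec_sub]
    _ ≤ C * wnorm2 w (u - v) := hC _

lemma half_mul_le_layerDist {c : ℝ} (hc : ∀ x, c * wnorm2 w x ≤ ∑ j, wnorm2 w (F j *ᵥ x))
    (u v : Fin n → ℝ) : c / 2 * wnorm2 w (u - v) ≤ layerDist w F u v := by
  have h : c * wnorm2 w (u - v) ≤ 2 * layerDist w F u v :=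
    calc c * wnorm2 w (u - v) ≤ ∑ j, wnorm2 w (F j *ᵥ u - F j *ᵥ v) := by
          simpa only [mulVec_sub] using hc (u - v)
      _ ≤ 2 * layerDist w F u v := by
          rw [layerDist, Finset.mul_sum]
          exact Finset.sum_le_sum fun j _ => wnorm2_sub_le_two_mul_sum_wnorm2_act_sub w _ _
  linarith

lemma sum_fin_succ_fun_eq_sum_snoc {α : Type*} [Fintype α] (m : ℕ) (g : (Fin (m + 1) → α) → ℝ) :
    ∑ f, g f = ∑ f : Fin m → α, ∑ a, g (Fin.snoc f a) := by
  rw [← (Fin.snocEquiv fun _ => α).sum_comp, Fintype.sum_prod_type, Finset.sum_comm]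
  rfl

lemma blisDist_succ (m : ℕ) (x y : Fin n → ℝ) :
    blisDist w F (m + 1) x y = ∑ js : Fin m → Fin N, ∑ ks : Fin m → Fin 2,
      layerDist w F (blis F m js ks x) (blis F m js ks y) := by
  simp only [blisDist, layerDist, sum_fin_succ_fun_eq_sum_snoc m]
  refine Finset.sum_congr rfl fun js _ => ?_
  rw [Finset.sum_comm]
  simp only [blis, Fin.init_snoc, Fin.snoc_last]

lemma blisDist_zero (x y : Fin n → ℝ) : blisDist w F 0 x y = wnorm2 w (x - y) := by
  simp [blisDist, blis]

lemma pow_mul_le_blisDist {a : ℝ} (ha : 0 ≤ a)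
    (hlayer : ∀ u v, a * wnorm2 w (u - v) ≤ layerDist w F u v) (m : ℕ) (x y : Fin n → ℝ) :
    a ^ m * wnorm2 w (x - y) ≤ blisDist w F m x y := by
  induction m with
  | zero => simp [blisDist_zero]
  | succ m ih =>
    calc a ^ (m + 1) * wnorm2 w (x - y) = a * (a ^ m * wnorm2 w (x - y)) := by ring
      _ ≤ a * blisDist w F m x y := mul_le_mul_of_nonneg_left ih ha
      _ ≤ blisDist w F (m + 1) x y := by
        rw [blisDist_succ, blisDist]
        simp only [Finset.mul_sum]
        gcongr with js _ ks _
        exact hlayer _ _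

lemma blisDist_le_pow_mul {b : ℝ} (hb : 0 ≤ b)
    (hlayer : ∀ u v, layerDist w F u v ≤ b * wnorm2 w (u - v)) (m : ℕ) (x y : Fin n → ℝ) :
    blisDist w F m x y ≤ b ^ m * wnorm2 w (x - y) := by
  induction m with
  | zero => simp [blisDist_zero]
  | succ m ih =>
    calc blisDist w F (m + 1) x y ≤ b * blisDist w F m x y := by
          rw [blisDist_succ, blisDist]
          simp only [Finset.mul_sum]
          gcongr with js _ ks _
          exact hlayer _ _
      _ ≤ b * (b ^ m * wnorm2 w (x - y)) := mul_le_mul_of_nonneg_left ih hb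
      _ = b ^ (m + 1) * wnorm2 w (x - y) := by ring

end Weighted

theorem blis_biLipschitz_general {n J : ℕ} (w : Fin n → ℝ)
    (F : Fin (J + 2) → Matrix (Fin n) (Fin n) ℝ) (c C : ℝ) (hc : 0 < c) (hcC : c ≤ C)
    (hframe : ∀ x : Fin n → ℝ,
      c * wnorm2 w x ≤ ∑ j, wnorm2 w ((F j) *ᵥ x) ∧
      ∑ j, wnorm2 w ((F j) *ᵥ x) ≤ C * wnorm2 w x) :
    ∀ m : ℕ, 1 ≤ m → ∀ x y : Fin n → ℝ,
      (c / 2) ^ m * wnorm2 w (x - y) ≤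
        (∑ js : Fin m → Fin (J + 2), ∑ ks : Fin m → Fin 2,
          wnorm2 w (blis F m js ks x - blis F m js ks y)) ∧
      (∑ js : Fin m → Fin (J + 2), ∑ ks : Fin m → Fin 2,
          wnorm2 w (blis F m js ks x - blis F m js ks y)) ≤
        C ^ m * wnorm2 w (x - y) := by
  intro m _ x y
  exact ⟨pow_mul_le_blisDist w F (by positivity)
      (half_mul_le_layerDist w F fun x => (hframe x).1) m x y,
    blisDist_le_pow_mul w F (hc.le.trans hcC) (layerDist_le w F fun x => (hframe x).2) m x y⟩

theorem blis_biLipschitz {n J : ℕ} (w : Fin n → ℝ) (hw : ∀ i, 0 < w i)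
    (F : Fin (J + 2) → Matrix (Fin n) (Fin n) ℝ) (c C : ℝ) (hc : 0 < c) (hcC : c ≤ C)
    (hframe : ∀ x : Fin n → ℝ,
      c * wnorm2 w x ≤ ∑ j, wnorm2 w ((F j) *ᵥ x) ∧
      ∑ j, wnorm2 w ((F j) *ᵥ x) ≤ C * wnorm2 w x) :
    ∀ m : ℕ, 1 ≤ m → ∀ x y : Fin n → ℝ,
      (c / 2) ^ m * wnorm2 w (x - y) ≤
        (∑ js : Fin m → Fin (J + 2), ∑ ks : Fin m → Fin 2,
          wnorm2 w (blis F m js ks x - blis F m js ks y)) ∧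
      (∑ js : Fin m → Fin (J + 2), ∑ ks : Fin m → Fin 2,
          wnorm2 w (blis F m js ks x - blis F m js ks y)) ≤
        C ^ m * wnorm2 w (x - y) :=
  blis_biLipschitz_general w F c C hc hcC hframe
end

section
/- Let w ∈ ℝⁿ have strictly positive entries and let F₀,…,F_{J+1} be n×n real matrices satisfying the lower frame bound c‖x‖_w² ≤ Σ_{j=0}^{J+1} ‖F_j x‖_w² for all x ∈ ℝⁿ, for some c > 0. Fix m ≥ 1. If x, y ∈ ℝⁿ satisfy B[j₁,k₁,…,j_m,k_m](x) = B[j₁,k₁,…,j_m,k_m](y) for every tuple (j₁,k₁,…,j_m,k_m) with jᵢ ∈ {0,…,J+1} and kᵢ ∈ {1,2}, then x = y. In other words, the m-layer BLIS module B_m is injective on ℝⁿ. -/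
open Matrix

/-!
Since `σ₁(v) - σ₂(v) = v`, the two coefficients of depth `m + 1` that end in `(j, 1)` and
`(j, 2)` recover `F_j` applied to a coefficient of depth `m`. By the lower frame bound the
family `(F_j)_j` is jointly injective, so equal coefficients of depth `m + 1` force equal
coefficients of depth `m`; descending to depth `0` gives `x = y`.
-/

lemma act_zero_sub_act_one {n : ℕ} (v : Fin n → ℝ) : act 0 v - act 1 v = v := by
  funext i
  simp [act]

lemma eq_of_act_eq {n : ℕ} {u v : Fin n → ℝ} (h : ∀ k, act k u = act k v) : u = v := by
  rw [← act_zero_sub_act_one u, ← act_zero_sub_act_one v, h 0, h 1]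

lemma wnorm2_nonneg {n : ℕ} (w z : Fin n → ℝ) : 0 ≤ wnorm2 w z :=
  Finset.sum_nonneg fun i _ => by positivity

lemma wnorm2_eq_zero_iff {n : ℕ} {w : Fin n → ℝ} (hw : ∀ i, w i ≠ 0) {z : Fin n → ℝ} :
    wnorm2 w z = 0 ↔ z = 0 := by
  rw [wnorm2, Finset.sum_eq_zero_iff_of_nonneg fun i _ => by positivity, funext_iff]
  simp [hw]

lemma eq_of_forall_mulVec_eq_of_frame {n : ℕ} {ι : Type*} [Fintype ι] {w : Fin n → ℝ}
    (hw : ∀ i, w i ≠ 0) {F : ι → Matrix (Fin n) (Fin n) ℝ} {c : ℝ} (hc : 0 < c)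
    (hframe : ∀ x : Fin n → ℝ, c * wnorm2 w x ≤ ∑ j, wnorm2 w (F j *ᵥ x))
    {u v : Fin n → ℝ} (h : ∀ j, F j *ᵥ u = F j *ᵥ v) : u = v := by
  have hbound : c * wnorm2 w (u - v) ≤ 0 := by
    simpa [mulVec_sub, h, wnorm2] using hframe (u - v)
  have hzero : wnorm2 w (u - v) = 0 :=
    le_antisymm (nonpos_of_mul_nonpos_right hbound hc) (wnorm2_nonneg w _)
  exact sub_eq_zero.mp ((wnorm2_eq_zero_iff hw).mp hzero)

lemma blis_snoc {n N : ℕ} (F : Fin N → Matrix (Fin n) (Fin n) ℝ) (m : ℕ)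
    (js : Fin m → Fin N) (ks : Fin m → Fin 2) (j : Fin N) (k : Fin 2) (x : Fin n → ℝ) :
    blis F (m + 1) (Fin.snoc js j) (Fin.snoc ks k) x = act k (F j *ᵥ blis F m js ks x) := by
  simp only [blis, Fin.snoc_last, Fin.init_snoc]

theorem blis_injective_general {n J : ℕ} (w : Fin n → ℝ) (hw : ∀ i, 0 < w i)
    (F : Fin (J + 2) → Matrix (Fin n) (Fin n) ℝ) (c : ℝ) (hc : 0 < c)
    (hframe : ∀ x : Fin n → ℝ, c * wnorm2 w x ≤ ∑ j, wnorm2 w ((F j) *ᵥ x))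
    (m : ℕ) (x y : Fin n → ℝ)
    (h : ∀ (js : Fin m → Fin (J + 2)) (ks : Fin m → Fin 2),
      blis F m js ks x = blis F m js ks y) :
    x = y := by
  induction m with
  | zero => simpa [blis] using h Fin.elim0 Fin.elim0
  | succ m ih =>
    refine ih fun js ks => eq_of_forall_mulVec_eq_of_frame (fun i => (hw i).ne') hc hframe
      fun j => eq_of_act_eq fun k => ?_
    simpa only [blis_snoc] using h (Fin.snoc js j) (Fin.snoc ks k)

theorem blis_injective {n J : ℕ} (w : Fin n → ℝ) (hw : ∀ i, 0 < w i)
    (F : Fin (J + 2) → Matrix (Fin n) (Fin n) ℝ) (c : ℝ) (hc : 0 < c)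
    (hframe : ∀ x : Fin n → ℝ, c * wnorm2 w x ≤ ∑ j, wnorm2 w ((F j) *ᵥ x))
    (m : ℕ) (hm : 1 ≤ m) (x y : Fin n → ℝ)
    (h : ∀ (js : Fin m → Fin (J + 2)) (ks : Fin m → Fin 2),
      blis F m js ks x = blis F m js ks y) :
    x = y :=
  blis_injective_general w hw F c hc hframe m x y h
end

section
/- Let n ≥ 1, let w ∈ ℝⁿ have strictly positive entries with W = diag(w), let V be an n×n real orthogonal matrix, and let Λ = diag(λ₁,…,λₙ) with λᵢ ∈ [0,1]. Let s₀ = 0 < s₁ = 1 < ⋯ < s_{J+1} be natural numbers and define the J+2 filter matrices F_j = W⁻¹ V diag(√(λᵢ^{sⱼ} − λᵢ^{s_{j+1}})) Vᵀ W for 0 ≤ j ≤ J and F_{J+1} = W⁻¹ V diag(√(λᵢ^{s_{J+1}})) Vᵀ W. Then for every m ≥ 1 and every x ∈ ℝⁿ, the total energy of the m-layer BLIS coefficients equals the energy of the input: Σ over all tuples (j₁,k₁,…,j_m,k_m) with jᵢ ∈ {0,…,J+1}, kᵢ ∈ {1,2} of ‖B[j₁,k₁,…,j_m,k_m](x)‖_w²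 = ‖x‖_w². -/
/-! Since `max a 0 ^ 2 + max (-a) 0 ^ 2 = a ^ 2`, the two activations together preserve
`‖·‖_w²`. Conjugating by `W` turns `F_j` into `V diag(g_j) Vᵀ`, and the squared diagonals
`g_j²` telescope to `λ^{s₀} = 1`, so the filters form a Parseval frame for `‖·‖_w²`. Hence one
layer of the cascade, summed over `(j, k)`, preserves the total energy, and induction on `m`
finishes the proof. -/

open Matrix

theorem max_zero_sq_add_max_neg_zero_sq {R : Type*} [Ring R] [LinearOrder R]
    [IsStrictOrderedRing R] (a : R) : max a 0 ^ 2 + max (-a) 0 ^ 2 = a ^ 2 := by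
  rcases le_total a 0 with h | h <;> simp [h]

theorem sum_wnorm2_act {n : ℕ} (w y : Fin n → ℝ) :
    ∑ k : Fin 2, wnorm2 w (act k y) = wnorm2 w y := by
  simp [act, wnorm2, Fin.sum_univ_two, ← Finset.sum_add_distrib, ← mul_add,
    max_zero_sq_add_max_neg_zero_sq]

theorem Fin.sum_univ_castSucc_sub_succ {M : Type*} [AddCommGroup M] (N : ℕ)
    (a : Fin (N + 1) → M) :
    ∑ j : Fin N, (a j.castSucc - a j.succ) = a 0 - a (Fin.last N) := by
  induction N with
  | zero => simp
  | succ N ih =>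
    rw [Fin.sum_univ_castSucc]
    simp only [Fin.succ_castSucc, ih (fun j => a j.castSucc)]
    simp

theorem wnorm2_eq_dotProduct {n : ℕ} (w v : Fin n → ℝ) :
    wnorm2 w v = (diagonal w *ᵥ v) ⬝ᵥ (diagonal w *ᵥ v) := by
  simp only [wnorm2, dotProduct, mulVec_diagonal]
  exact Finset.sum_congr rfl fun i _ => by ring

theorem dotProduct_self_mulVec_of_transpose_mul_self {m n R : Type*} [Fintype m] [Fintype n]
    [DecidableEq n] [CommSemiring R] {A : Matrix m n R} (hA : Aᵀ * A = 1) (u : n → R) :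
    (A *ᵥ u) ⬝ᵥ (A *ᵥ u) = u ⬝ᵥ u := by
  rw [dotProduct_mulVec, ← vecMul_transpose, vecMul_vecMul, hA, vecMul_one]

def IsParsevalFrame {n : ℕ} {ι : Type*} [Fintype ι] (w : Fin n → ℝ)
    (F : ι → Matrix (Fin n) (Fin n) ℝ) : Prop :=
  ∀ y, ∑ j, wnorm2 w (F j *ᵥ y) = wnorm2 w y

theorem isParsevalFrame_of_sum_sq_eq_one {n : ℕ} {ι : Type*} [Fintype ι] {w : Fin n → ℝ}
    (hw : ∀ i, w i ≠ 0) {V : Matrix (Fin n) (Fin n) ℝ} (hV : Vᵀ * V = 1)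
    (g : ι → Fin n → ℝ) (hg : ∀ i, ∑ j, g j i ^ 2 = 1) :
    IsParsevalFrame w fun j =>
      diagonal (fun i => (w i)⁻¹) * V * diagonal (g j) * Vᵀ * diagonal w := by
  intro y
  set z := Vᵀ *ᵥ (diagonal w *ᵥ y)
  have hwinv : diagonal w * diagonal (fun i => (w i)⁻¹) = 1 := by
    rw [diagonal_mul_diagonal, ← diagonal_one]
    exact congrArg diagonal (funext fun i => mul_inv_cancel₀ (hw i))
  have hweighted : ∀ j, diagonal w *ᵥ ((diagonal (fun i => (w i)⁻¹) * V * diagonal (g j) * Vᵀ *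
      diagonal w) *ᵥ y) = V *ᵥ (diagonal (g j) *ᵥ z) := fun j => by
    simp only [mulVec_mulVec, ← Matrix.mul_assoc, hwinv, Matrix.one_mul, z]
  have hVt : Vᵀᵀ * Vᵀ = 1 := by rw [transpose_transpose, mul_eq_one_comm, hV]
  calc ∑ j, wnorm2 w (_ *ᵥ y) = ∑ j, ∑ i, g j i ^ 2 * z i ^ 2 := by
        refine Finset.sum_congr rfl fun j _ => ?_
        rw [wnorm2_eq_dotProduct, hweighted, dotProduct_self_mulVec_of_transpose_mul_self hV]
        simp only [dotProduct, mulVec_diagonal]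
        exact Finset.sum_congr rfl fun i _ => by ring
    _ = ∑ i, (∑ j, g j i ^ 2) * z i ^ 2 := by simp only [Finset.sum_mul]; exact Finset.sum_comm
    _ = z ⬝ᵥ z := by simp only [hg, one_mul, dotProduct, ← sq]
    _ = wnorm2 w y := by
        rw [dotProduct_self_mulVec_of_transpose_mul_self hVt, wnorm2_eq_dotProduct]

theorem Fin.sum_pi_snoc {α M : Type*} [Fintype α] [AddCommMonoid M] (m : ℕ)
    (f : (Fin (m + 1) → α) → M) :
    ∑ v, f v = ∑ v : Fin m → α, ∑ a, f (Fin.snoc v a) := by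
  rw [← (Fin.snocEquiv fun _ => α).sum_comp, Fintype.sum_prod_type, Finset.sum_comm]
  rfl

theorem blis_succ_snoc {n N : ℕ} (F : Fin N → Matrix (Fin n) (Fin n) ℝ) (m : ℕ)
    (js : Fin m → Fin N) (j : Fin N) (ks : Fin m → Fin 2) (k : Fin 2) (x : Fin n → ℝ) :
    blis F (m + 1) (Fin.snoc js j) (Fin.snoc ks k) x = act k (F j *ᵥ blis F m js ks x) := by
  simp [blis]

theorem IsParsevalFrame.sum_wnorm2_blis {n N : ℕ} {w : Fin n → ℝ}
    {F : Fin N → Matrix (Fin n) (Fin n) ℝ} (hF : IsParsevalFrame w F) (m : ℕ) (x : Fin n → ℝ) :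
    ∑ js : Fin m → Fin N, ∑ ks : Fin m → Fin 2, wnorm2 w (blis F m js ks x) = wnorm2 w x := by
  induction m with
  | zero => simp [blis]
  | succ m ih =>
    calc _ = ∑ js, ∑ ks, ∑ j, ∑ k, wnorm2 w (act k (F j *ᵥ blis F m js ks x)) := by
          simp only [Fin.sum_pi_snoc (m := m), blis_succ_snoc]
          exact Finset.sum_congr rfl fun _ _ => Finset.sum_comm
      _ = _ := by
          rw [IsParsevalFrame] at hF
          simp only [sum_wnorm2_act, hF, ih]

theorem sum_sq_sqrt_sub_add_sq_sqrt_last {N : ℕ} {a : Fin (N + 1) → ℝ} (ha : Antitone a)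
    (hlast : 0 ≤ a (Fin.last N)) :
    ∑ j : Fin N, √(a j.castSucc - a j.succ) ^ 2 + √(a (Fin.last N)) ^ 2 = a 0 := by
  have hstep : ∀ j : Fin N, √(a j.castSucc - a j.succ) ^ 2 = a j.castSucc - a j.succ :=
    fun j => Real.sq_sqrt (sub_nonneg.2 (ha (Fin.castSucc_le_succ j)))
  simp only [hstep, Fin.sum_univ_castSucc_sub_succ, Real.sq_sqrt hlast, sub_add_cancel]

theorem blis_W1_energy_conservation_general {n J : ℕ}
    (w : Fin n → ℝ) (hw : ∀ i, 0 < w i)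
    (V : Matrix (Fin n) (Fin n) ℝ) (hV : Vᵀ * V = 1)
    (lam : Fin n → ℝ) (hlam : ∀ i, lam i ∈ Set.Icc (0 : ℝ) 1)
    (s : Fin (J + 2) → ℕ) (hs0 : s 0 = 0) (hs : StrictMono s)
    (F : Fin (J + 2) → Matrix (Fin n) (Fin n) ℝ)
    (hF : ∀ j : Fin (J + 1), F j.castSucc =
      Matrix.diagonal (fun i => (w i)⁻¹) * V *
        Matrix.diagonal (fun i => Real.sqrt ((lam i) ^ (s j.castSucc) - (lam i) ^ (s j.succ))) *
        Vᵀ * Matrix.diagonal w)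
    (hFlast : F (Fin.last (J + 1)) =
      Matrix.diagonal (fun i => (w i)⁻¹) * V *
        Matrix.diagonal (fun i => Real.sqrt ((lam i) ^ (s (Fin.last (J + 1))))) *
        Vᵀ * Matrix.diagonal w) :
    ∀ m : ℕ, 1 ≤ m → ∀ x : Fin n → ℝ,
      (∑ js : Fin m → Fin (J + 2), ∑ ks : Fin m → Fin 2,
        wnorm2 w (blis F m js ks x)) = wnorm2 w x := by
  let g : Fin (J + 2) → Fin n → ℝ :=
    Fin.snoc (fun j i => √(lam i ^ s j.castSucc - lam i ^ s j.succ))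
      (fun i => √(lam i ^ s (Fin.last (J + 1))))
  have hFg : F = fun j =>
      diagonal (fun i => (w i)⁻¹) * V * diagonal (g j) * Vᵀ * diagonal w := by
    funext j
    induction j using Fin.lastCases with
    | last => simp [g, hFlast]
    | cast j => simp [g, hF j]
  have hg : ∀ i, ∑ j, g j i ^ 2 = 1 := fun i => by
    have hpow : Antitone fun j => lam i ^ s j :=
      fun _ _ hjk => pow_le_pow_of_le_one (hlam i).1 (hlam i).2 (hs.monotone hjk)
    simpa [g, Fin.sum_univ_castSucc, hs0] using
      sum_sq_sqrt_sub_add_sq_sqrt_last hpow (pow_nonneg (hlam i).1 _)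
  intro m _ x
  rw [hFg]
  exact (isParsevalFrame_of_sum_sq_eq_one (fun i => (hw i).ne') hV g hg).sum_wnorm2_blis m x

theorem blis_W1_energy_conservation {n J : ℕ} (hn : 1 ≤ n)
    (w : Fin n → ℝ) (hw : ∀ i, 0 < w i)
    (V : Matrix (Fin n) (Fin n) ℝ) (hV : Vᵀ * V = 1)
    (lam : Fin n → ℝ) (hlam : ∀ i, lam i ∈ Set.Icc (0 : ℝ) 1)
    (s : Fin (J + 2) → ℕ) (hs0 : s 0 = 0) (hs1 : s 1 = 1) (hs : StrictMono s)
    (F : Fin (J + 2) → Matrix (Fin n) (Fin n) ℝ)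
    (hF : ∀ j : Fin (J + 1), F j.castSucc =
      Matrix.diagonal (fun i => (w i)⁻¹) * V *
        Matrix.diagonal (fun i => Real.sqrt ((lam i) ^ (s j.castSucc) - (lam i) ^ (s j.succ))) *
        Vᵀ * Matrix.diagonal w)
    (hFlast : F (Fin.last (J + 1)) =
      Matrix.diagonal (fun i => (w i)⁻¹) * V *
        Matrix.diagonal (fun i => Real.sqrt ((lam i) ^ (s (Fin.last (J + 1))))) *
        Vᵀ * Matrix.diagonal w) :
    ∀ m : ℕ, 1 ≤ m → ∀ x : Fin n → ℝ,
      (∑ js : Fin m → Fin (J + 2), ∑ ks : Fin m → Fin 2,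
        wnorm2 w (blis F m js ks x)) = wnorm2 w x :=
  blis_W1_energy_conservation_general w hw V hV lam hlam s hs0 hs F hF hFlast
end
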